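/- The map α ↦ ᾱ := (ᾱ(0),ᾱ(1),ᾱ(2),…), where ᾱ(m) = (α(0),…,α(m−1)) is the initial segment of length m, sends each α ∈ ℕ^ℕ to a point of natural Baire space ℬ, and it induces a homeomorphism from ℕ^ℕ with the product topology onto the quotient space ℬ/≡. -/

import Mathlib

/-! # Natural Topology: basic framework (Waaldijk) -/

/-- A pre-natural space: a countable set of basic dots with a decidable
pre-apartness `apart` and a decidable refinement partial order `refines`. -/
structure PreNaturalSpace (V : Type) : Type where
  countable' : Countable V
  apart : V → V → Prop
  refines : V → V → Prop
  apart_dec : DecidableRel apart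
  refines_dec : DecidableRel refines
  apart_symm : ∀ a b, apart a b → apart b a
  apart_irrefl : ∀ a, ¬ apart a a
  apart_mono : ∀ a b c, refines a b → apart c b → apart c a
  refines_refl : ∀ a, refines a a
  refines_trans : ∀ a b c, refines a b → refines b c → refines a c
  refines_antisymm : ∀ a b, refines a b → refines b a → a = b

namespace PreNaturalSpace

variable {V W : Type}

/-- `a ≺ b` : strict refinement. -/
def strict (P : PreNaturalSpace V) (a b : V) : Prop := P.refines a b ∧ a ≠ b

/-- A point is a shrinking sequence of dots deciding every apart pair of dots. -/
structure IsPoint (P : PreNaturalSpace V) (p : ℕ → V) : Prop where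
  mono : ∀ n, P.refines (p (n + 1)) (p n)
  shrink : ∀ n, ∃ m, P.strict (p m) (p n)
  decides : ∀ a b, P.apart a b → ∃ m, P.apart (p m) a ∨ P.apart (p m) b

/-- The set of points of a pre-natural space. -/
def Pt (P : PreNaturalSpace V) : Type := { p : ℕ → V // P.IsPoint p }

/-- `p` begins with the dot `a` : some `p m ≺ a`. -/
def begins (P : PreNaturalSpace V) (p : ℕ → V) (a : V) : Prop := ∃ m, P.strict (p m) a

/-- Apartness between a dot and a point. -/
def dApart (P : PreNaturalSpace V) (a : V) (p : ℕ → V) : Prop := ∃ m, P.apart (p m) a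

/-- Apartness between points. -/
def pApart (P : PreNaturalSpace V) (p q : P.Pt) : Prop := ∃ n, P.apart (p.1 n) (q.1 n)

/-- Equivalence of points: the negation of apartness. -/
def pEquiv (P : PreNaturalSpace V) (p q : P.Pt) : Prop := ¬ P.pApart p q

variable (P : PreNaturalSpace V)

lemma refines_of_le {p : ℕ → V} (hp : ∀ n, P.refines (p (n + 1)) (p n)) :
    ∀ {m k : ℕ}, m ≤ k → P.refines (p k) (p m) := by
  intro m k h
  induction h with
  | refl => exact P.refines_refl _
  | step h ih => exact P.refines_trans _ _ _ (hp _) ih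

lemma begins_mono {z : ℕ → V} (hz : P.IsPoint z) {a b : V} (hab : P.refines a b)
    (h : P.begins z a) : P.begins z b := by
  obtain ⟨j, hj1, hj2⟩ := h
  have hzb : P.refines (z j) b := P.refines_trans _ _ _ hj1 hab
  by_cases he : z j = b
  · obtain ⟨i, hi1, hi2⟩ := hz.shrink j
    exact ⟨i, P.refines_trans _ _ _ hi1 hzb, fun h' => hi2 (h'.trans he.symm)⟩
  · exact ⟨j, hzb, he⟩

/-- The natural (apartness) topology as a predicate on subsets of the point set. -/
def NatOpen (U : Set P.Pt) : Prop :=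
  ∀ x ∈ U, ∀ y : P.Pt, P.pApart y x ∨ ∃ m, { z : P.Pt | P.begins z.1 (y.1 m) } ⊆ U

instance instTopPt : TopologicalSpace P.Pt where
  IsOpen := P.NatOpen
  isOpen_univ := fun _ _ _ => Or.inr ⟨0, fun _ _ => trivial⟩
  isOpen_inter := by
    intro U U' hU hU' x hx y
    rcases hU x hx.1 y with h | ⟨m, hm⟩
    · exact Or.inl h
    rcases hU' x hx.2 y with h | ⟨k, hk⟩
    · exact Or.inl h
    refine Or.inr ⟨max m k, fun z hz => ⟨hm ?_, hk ?_⟩⟩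
    · exact P.begins_mono z.2 (P.refines_of_le y.2.mono (le_max_left m k)) hz
    · exact P.begins_mono z.2 (P.refines_of_le y.2.mono (le_max_right m k)) hz
  isOpen_sUnion := by
    intro S hS x hx y
    obtain ⟨U, hU, hxU⟩ := hx
    rcases hS U hU x hxU y with h | ⟨m, hm⟩
    · exact Or.inl h
    · exact Or.inr ⟨m, fun z hz => ⟨U, hU, hm hz⟩⟩

lemma pEquiv_refl (p : P.Pt) : P.pEquiv p p := fun ⟨_, h⟩ => P.apart_irrefl _ h

lemma pEquiv_symm {p q : P.Pt} (h : P.pEquiv p q) : P.pEquiv q p :=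
  fun ⟨n, hn⟩ => h ⟨n, P.apart_symm _ _ hn⟩

lemma pEquiv_trans {p q r : P.Pt} (hpq : P.pEquiv p q) (hqr : P.pEquiv q r) :
    P.pEquiv p r := by
  rintro ⟨n, hn⟩
  obtain ⟨m, hm⟩ := q.2.decides (p.1 n) (r.1 n) hn
  rcases hm with hm | hm
  · -- q.1 m apart from p.1 n
    refine hpq ⟨max m n, ?_⟩
    have h1 : P.apart (p.1 n) (q.1 (max m n)) :=
      P.apart_mono _ _ _ (P.refines_of_le q.2.mono (le_max_left m n)) (P.apart_symm _ _ hm)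
    have h2 : P.apart (q.1 (max m n)) (p.1 (max m n)) :=
      P.apart_mono _ _ _ (P.refines_of_le p.2.mono (le_max_right m n)) (P.apart_symm _ _ h1)
    exact P.apart_symm _ _ h2
  · refine hqr ⟨max m n, ?_⟩
    have h1 : P.apart (r.1 n) (q.1 (max m n)) :=
      P.apart_mono _ _ _ (P.refines_of_le q.2.mono (le_max_left m n)) (P.apart_symm _ _ hm)
    exact P.apart_mono _ _ _ (P.refines_of_le r.2.mono (le_max_right m n))
      (P.apart_symm _ _ h1)

/-- The setoid of points modulo `≡`. -/
def ptSetoid : Setoid P.Pt :=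
  ⟨P.pEquiv, ⟨P.pEquiv_refl, P.pEquiv_symm, P.pEquiv_trans⟩⟩

/-- `â` : the set of points beginning with the dot `a`. -/
def hatSet (a : V) : Set P.Pt := { p | P.begins p.1 a }

/-- `ā` : the `≡`-closure of `â`. -/
def barSet (a : V) : Set P.Pt := { p | ∃ q : P.Pt, P.begins q.1 a ∧ P.pEquiv p q }

/-- A natural space is basic-open when every `ā` is open. -/
def BasicOpen : Prop := ∀ a : V, IsOpen (P.barSet a)

/-- Existence of a maximal dot. -/
def HasMaxDot : Prop := ∃ m, ∀ a, P.refines a m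

/-- Every basic dot begins at least one point. -/
def AllDotsInhabited : Prop := ∀ a : V, ∃ p : ℕ → V, P.IsPoint p ∧ P.begins p a

/-- The conditions making the point set of a pre-natural space a natural space. -/
def IsNaturalSpace : Prop := P.HasMaxDot ∧ P.AllDotsInhabited

end PreNaturalSpace

/-- A refinement morphism between (pre-)natural spaces: a map on dots sending
points to points and reflecting apartness of points. -/
structure RefMorphism {V W : Type} (P : PreNaturalSpace V) (Q : PreNaturalSpace W) : Type where
  toFun : V → W
  maps_points : ∀ p : ℕ → V, P.IsPoint p → Q.IsPoint (fun n => toFun (p n))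
  reflects_apart : ∀ p q : ℕ → V, P.IsPoint p → P.IsPoint q →
    (∃ n, Q.apart (toFun (p n)) (toFun (q n))) → ∃ n, P.apart (p n) (q n)

/-- The induced map on points of a refinement morphism. -/
def RefMorphism.pointMap {V W : Type} {P : PreNaturalSpace V} {Q : PreNaturalSpace W}
    (f : RefMorphism P Q) (p : P.Pt) : Q.Pt :=
  ⟨fun n => f.toFun (p.1 n), f.maps_points p.1 p.2⟩

namespace PreNaturalSpace

variable {V W : Type} (P : PreNaturalSpace V)

/-- Restriction of a pre-natural space to a subset of dots. -/
noncomputable def restrict (S : Set V) : PreNaturalSpace S where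
  countable' := by haveI := P.countable'; exact inferInstance
  apart a b := P.apart a.1 b.1
  refines a b := P.refines a.1 b.1
  apart_dec := Classical.decRel _
  refines_dec := Classical.decRel _
  apart_symm _ _ h := P.apart_symm _ _ h
  apart_irrefl a := P.apart_irrefl a.1
  apart_mono _ _ _ h1 h2 := P.apart_mono _ _ _ h1 h2
  refines_refl a := P.refines_refl a.1
  refines_trans _ _ _ h1 h2 := P.refines_trans _ _ _ h1 h2
  refines_antisymm _ _ h1 h2 := Subtype.ext (P.refines_antisymm _ _ h1 h2)

/-! ## Trail spaces -/

/-- A `≺`-trail: a finite strictly refining sequence `a₀ ≻ a₁ ≻ …`. -/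
def Trail : Type := { l : List V // l.Chain' fun a b => P.strict b a }

lemma strict_trans_flip : Transitive (fun a b : V => P.strict b a) := by
  rintro a b c ⟨h1, h1'⟩ ⟨h2, h2'⟩
  refine ⟨P.refines_trans _ _ _ h2 h1, fun he => ?_⟩
  exact h2' (P.refines_antisymm _ _ h2 (he ▸ h1))

lemma last_refines_of_prefix {a b : List V}
    (ha : a.Chain' fun x y => P.strict y x) (hpre : b <+: a)
    {x y : V} (hx : x ∈ a.getLast?) (hy : y ∈ b.getLast?) :
    P.refines x y := by
  haveI : IsTrans V (fun x y : V => P.strict y x) := ⟨fun _ _ _ h1 h2 => P.strict_trans_flip h1 h2⟩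
  have hpw : a.Pairwise fun x y => P.strict y x := List.isChain_iff_pairwise.mp ha
  obtain ⟨t, rfl⟩ := hpre
  rcases eq_or_ne t [] with rfl | ht
  · rw [List.append_nil] at hx
    have : x = y := by
      rw [Option.mem_def] at hx hy
      exact Option.some_injective _ (hx ▸ hy ▸ rfl)
    exact this ▸ P.refines_refl x
  · rw [List.getLast?_append_of_ne_nil _ ht] at hx
    have hxt : x ∈ t := List.mem_of_mem_getLast? hx
    have hyb : y ∈ b := List.mem_of_mem_getLast? hy
    have := (List.pairwise_append.mp hpw).2.2 y hyb x hxt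
    exact this.1

/-- The trail space of a pre-natural space: dots are `≺`-trails, with
`a ⊑* b` iff `b` is an initial segment of `a`, and `a #* b` iff the last
dots of `a` and `b` are apart. -/
noncomputable def trailSpace : PreNaturalSpace P.Trail where
  countable' := by haveI := P.countable'; exact inferInstanceAs (Countable
    { l : List V // l.Chain' fun a b => P.strict b a })
  apart a b := ∃ x ∈ a.1.getLast?, ∃ y ∈ b.1.getLast?, P.apart x y
  refines a b := b.1 <+: a.1
  apart_dec := Classical.decRel _
  refines_dec := Classical.decRel _
  apart_symm := by
    rintro a b ⟨x, hx, y, hy, hxy⟩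
    exact ⟨y, hy, x, hx, P.apart_symm _ _ hxy⟩
  apart_irrefl := by
    rintro a ⟨x, hx, y, hy, hxy⟩
    rw [Option.mem_def] at hx hy
    have : x = y := Option.some_injective _ (hx ▸ hy ▸ rfl)
    exact P.apart_irrefl x (this ▸ hxy)
  apart_mono := by
    rintro a b c hab ⟨x, hx, y, hy, hxy⟩
    have hbne : b.1 ≠ [] := by
      intro h
      rw [h] at hy
      simp at hy
    have hane : a.1 ≠ [] := by
      intro h
      exact hbne (List.prefix_nil.mp (h ▸ hab))
    obtain ⟨z, hz⟩ : ∃ z, z ∈ a.1.getLast? := by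
      rcases h : a.1.getLast? with _ | z
      · exact absurd (List.getLast?_eq_none_iff.mp h) hane
      · exact ⟨z, rfl⟩
    have hzy : P.refines z y := P.last_refines_of_prefix a.2 hab hz hy
    exact ⟨x, hx, z, hz, P.apart_mono _ _ _ hzy hxy⟩
  refines_refl a := List.prefix_refl a.1
  refines_trans _ _ _ h1 h2 := h2.trans h1
  refines_antisymm a b h1 h2 :=
    Subtype.ext (h2.eq_of_length (le_antisymm h2.length_le h1.length_le))

end PreNaturalSpace

open Classical in
/-- `p♯(n)` : the `≺`-trail obtained from `p₀, …, p_{n-1}` by deleting repetitions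
(for a shrinking sequence `p`, repetitions are consecutive). -/
noncomputable def segList {V : Type} (p : ℕ → V) : ℕ → List V
  | 0 => []
  | n + 1 =>
    if (segList p n).getLast? = some (p n) then segList p n
    else segList p n ++ [p n]

namespace PreNaturalSpace

variable {V W : Type} (P : PreNaturalSpace V)

/-- The map on trail dots sending a nonempty trail to its last element and
the empty trail to `m`. -/
def lastDot (m : V) (q : P.Trail) : V := q.1.getLast?.getD m

/-- `g` is the point map induced by a trail morphism `f` (a refinement morphism
on the trail space): `g p = f (p♯(0)), f (p♯(1)), …`. -/
def InducedByTrailMorphism (Q : PreNaturalSpace W) (f : RefMorphism P.trailSpace Q)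
    (g : P.Pt → Q.Pt) : Prop :=
  ∀ p : P.Pt, ∃ t : P.trailSpace.Pt, (∀ n, (t.1 n).1 = segList p.1 n) ∧ g p = f.pointMap t

/-- `g` is a natural morphism map: induced by a refinement morphism or by a trail morphism. -/
def IsNaturalMorphismMap (Q : PreNaturalSpace W) (g : P.Pt → Q.Pt) : Prop :=
  (∃ f : RefMorphism P Q, ∀ p, g p = f.pointMap p) ∨
  (∃ f : RefMorphism P.trailSpace Q, P.InducedByTrailMorphism Q f g)

/-- Two natural spaces are isomorphic: natural morphisms both ways, inverse up to `≡`. -/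
def AreIsomorphic (Q : PreNaturalSpace W) : Prop :=
  ∃ (f : P.Pt → Q.Pt) (g : Q.Pt → P.Pt),
    P.IsNaturalMorphismMap Q f ∧ Q.IsNaturalMorphismMap P g ∧
    (∀ x, P.pEquiv (g (f x)) x) ∧ (∀ y, Q.pEquiv (f (g y)) y)

/-- A natural space is a basic neighborhood space iff it is isomorphic to a basic-open space. -/
def IsBasicNbhdSpace : Prop :=
  ∃ (W' : Type) (Q : PreNaturalSpace W'), Q.IsNaturalSpace ∧ Q.BasicOpen ∧ P.AreIsomorphic Q

/-! ## Trees, treas, spreads, spraids, fans -/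

/-- `a` is a successor of `c`. -/
def IsSucc (a c : V) : Prop := P.strict a c ∧ ∀ b, P.strict a b → P.refines b c → b = c

/-- A successor-trail (as a list, each entry a successor of the previous one). -/
def SuccChain (l : List V) : Prop := l.Chain' fun x y => P.IsSucc y x

/-- A successor-trail from `m` to `a`. -/
def IsSuccTrailFromTo (m a : V) (l : List V) : Prop :=
  P.SuccChain l ∧ l.head? = some m ∧ l.getLast? = some a

/-- `(V,⊑)` is a tree. -/
def IsTree : Prop :=
  ∃ m, (∀ a, P.refines a m) ∧ ∀ a, ∃! l : List V, P.IsSuccTrailFromTo m a l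

/-- `(V,⊑)` is a trea. -/
def IsTrea : Prop :=
  ∃ m, (∀ a, P.refines a m) ∧ (∀ a, { b | P.refines a b }.Finite) ∧
    ∀ a, ∃ g : ℕ, ∀ l : List V, P.IsSuccTrailFromTo m a l → l.length = g

/-- Every infinite successor-trail is a point. -/
def SuccTrailsArePoints : Prop :=
  ∀ q : ℕ → V, (∀ n, P.IsSucc (q (n + 1)) (q n)) → P.IsPoint q

def IsSpread : Prop := P.IsTree ∧ P.SuccTrailsArePoints

def IsSpraid : Prop := P.IsTrea ∧ P.SuccTrailsArePoints

/-- Finitely branching: every dot has finitely many successors. -/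
def FinBranching : Prop := ∀ a : V, { b | P.IsSucc b a }.Finite

def IsFan : Prop := P.IsSpread ∧ P.FinBranching

def IsFann : Prop := P.IsSpraid ∧ P.FinBranching

end PreNaturalSpace
/-! ## Natural Baire space and natural Cantor space -/

/-- Natural Baire space: dots are finite sequences of naturals, `b ⊑ a` iff
`a` is an initial segment of `b`, apart iff incomparable. -/
noncomputable def BairePre : PreNaturalSpace (List ℕ) where
  countable' := inferInstance
  apart a b := ¬ a <+: b ∧ ¬ b <+: a
  refines a b := b <+: a
  apart_dec := Classical.decRel _
  refines_dec := Classical.decRel _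
  apart_symm _ _ h := ⟨h.2, h.1⟩
  apart_irrefl a h := h.1 (List.prefix_refl a)
  apart_mono := by
    intro a b c hab hcb
    constructor
    · intro hca
      rcases List.prefix_or_prefix_of_prefix hca hab with h | h
      · exact hcb.1 h
      · exact hcb.2 h
    · intro hac
      exact hcb.2 (hab.trans hac)
  refines_refl a := List.prefix_refl a
  refines_trans _ _ _ h1 h2 := h2.trans h1
  refines_antisymm _ _ h1 h2 := h2.eq_of_length (le_antisymm h2.length_le h1.length_le)

/-- Natural Cantor space: the restriction of natural Baire space to finite 0-1 sequences. -/
noncomputable def CantorPre : PreNaturalSpace ({ l : List ℕ | ∀ x ∈ l, x ≤ 1 }) :=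
  BairePre.restrict { l : List ℕ | ∀ x ∈ l, x ≤ 1 }

/-- The sequence of initial segments of `α ∈ ℕ^ℕ`. -/
def initSegs (α : ℕ → ℕ) (n : ℕ) : List ℕ := (List.range n).map α

/-! A point `p` of `ℬ` is a chain of finite sequences, each a prefix of the next, of
unbounded length, so all its dots are initial segments of one `seqOf p ∈ ℕ^ℕ`; two points are
apart exactly when these sequences differ somewhere. Thus `α ↦ ᾱ` and `p ↦ seqOf p` are
mutually inverse modulo `≡`, and both are continuous because the `hatSet`s of the dots of `ᾱ`
correspond to the cylinders around `α`. -/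

namespace PreNaturalSpace

variable {V : Type} (P : PreNaturalSpace V)

lemma pApart_of_apart (p q : P.Pt) {a b : ℕ} (h : P.apart (p.1 a) (q.1 b)) : P.pApart p q := by
  refine ⟨max a b, P.apart_symm _ _ ?_⟩
  have hq : P.apart (p.1 a) (q.1 (max a b)) :=
    P.apart_mono _ _ _ (P.refines_of_le q.2.mono (le_max_right a b)) h
  exact P.apart_mono _ _ _ (P.refines_of_le p.2.mono (le_max_left a b)) (P.apart_symm _ _ hq)

lemma exists_hatSet_subset_of_isOpen {U : Set P.Pt} (hU : IsOpen U) {x : P.Pt} (hx : x ∈ U) :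
    ∃ m, P.hatSet (x.1 m) ⊆ U :=
  (hU x hx x).resolve_left (P.pEquiv_refl x)

end PreNaturalSpace

lemma initSegs_length (α : ℕ → ℕ) (n : ℕ) : (initSegs α n).length = n := by
  simp [initSegs]

lemma initSegs_getElem (α : ℕ → ℕ) {n i : ℕ} (hi : i < (initSegs α n).length) :
    (initSegs α n)[i] = α i := by
  simp [initSegs]

lemma initSegs_prefix_initSegs (α : ℕ → ℕ) {m n : ℕ} (h : m ≤ n) :
    initSegs α m <+: initSegs α n := by
  have : List.range m <+: List.range n := by
    simpa [List.take_range, h] using List.take_prefix m (List.range n)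
  exact this.map α

lemma initSegs_eq_of_mem_cylinder {α β : ℕ → ℕ} {m : ℕ} (h : β ∈ PiNat.cylinder α m) :
    initSegs β m = initSegs α m := by
  simpa [initSegs, List.map_inj_left] using h

namespace Baire

lemma length_lt_of_strict {a b : List ℕ} (h : BairePre.strict a b) : b.length < a.length :=
  lt_of_le_of_ne h.1.length_le fun he => h.2 (h.1.eq_of_length he).symm

lemma apart_of_not_prefix {a s : List ℕ} (hlen : a.length ≤ s.length) (ha : ¬ a <+: s) :
    BairePre.apart s a :=
  ⟨fun hsa => ha (hsa.eq_of_length (le_antisymm hsa.length_le hlen) ▸ List.prefix_refl s), ha⟩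

lemma strict_initSegs_succ (α : ℕ → ℕ) (n : ℕ) :
    BairePre.strict (initSegs α (n + 1)) (initSegs α n) :=
  ⟨initSegs_prefix_initSegs α n.le_succ, fun he => by
    simpa [initSegs_length] using congrArg List.length he⟩

lemma isPoint_initSegs (α : ℕ → ℕ) : BairePre.IsPoint (initSegs α) where
  mono n := (strict_initSegs_succ α n).1
  shrink n := ⟨n + 1, strict_initSegs_succ α n⟩
  decides a b hab := by
    refine ⟨max a.length b.length, ?_⟩
    have ha_len : a.length ≤ (initSegs α (max a.length b.length)).length := by
      rw [initSegs_length]; exact le_max_left _ _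
    have hb_len : b.length ≤ (initSegs α (max a.length b.length)).length := by
      rw [initSegs_length]; exact le_max_right _ _
    by_cases ha : a <+: initSegs α (max a.length b.length)
    · have hb : ¬ b <+: initSegs α (max a.length b.length) := fun hb =>
        (List.prefix_or_prefix_of_prefix ha hb).elim hab.1 hab.2
      exact Or.inr (apart_of_not_prefix hb_len hb)
    · exact Or.inl (apart_of_not_prefix ha_len ha)

def toPt (α : ℕ → ℕ) : BairePre.Pt := ⟨initSegs α, isPoint_initSegs α⟩

lemma begins_toPt_of_mem_cylinder {α β : ℕ → ℕ} {m : ℕ} (h : β ∈ PiNat.cylinder α m) :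
    BairePre.begins (toPt β).1 (initSegs α m) :=
  ⟨m + 1, initSegs_eq_of_mem_cylinder h ▸ strict_initSegs_succ β m⟩

lemma continuous_toPt : Continuous toPt := by
  refine continuous_def.2 fun U hU => isOpen_iff_mem_nhds.2 fun α hα => ?_
  obtain ⟨m, hm⟩ := BairePre.exists_hatSet_subset_of_isOpen hU hα
  exact Filter.mem_of_superset
    ((PiNat.isOpen_cylinder _ α m).mem_nhds (PiNat.self_mem_cylinder α m))
    fun β hβ => hm (begins_toPt_of_mem_cylinder hβ)

lemma prefix_of_le (p : BairePre.Pt) {m k : ℕ} (h : m ≤ k) : p.1 m <+: p.1 k :=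
  BairePre.refines_of_le p.2.mono h

lemma exists_lt_length (p : BairePre.Pt) (i : ℕ) : ∃ m, i < (p.1 m).length := by
  induction i with
  | zero =>
    obtain ⟨m, hm⟩ := p.2.shrink 0
    exact ⟨m, (Nat.zero_le _).trans_lt (length_lt_of_strict hm)⟩
  | succ i ih =>
    obtain ⟨m, hm⟩ := ih
    obtain ⟨k, hk⟩ := p.2.shrink m
    exact ⟨k, Nat.lt_of_le_of_lt hm (length_lt_of_strict hk)⟩

-- The default `0` is never read: the chosen dot is longer than `i`.
noncomputable def seqOf (p : BairePre.Pt) (i : ℕ) : ℕ :=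
  (p.1 (exists_lt_length p i).choose).getD i 0

lemma getElem_eq_seqOf (p : BairePre.Pt) {m i : ℕ} (h : i < (p.1 m).length) :
    (p.1 m)[i] = seqOf p i := by
  have hk := (exists_lt_length p i).choose_spec
  set k := (exists_lt_length p i).choose
  rw [seqOf, List.getD_eq_getElem _ 0 hk, (prefix_of_le p (le_max_left m k)).getElem h,
    (prefix_of_le p (le_max_right m k)).getElem hk]

lemma eq_initSegs_seqOf (p : BairePre.Pt) (m : ℕ) :
    p.1 m = initSegs (seqOf p) (p.1 m).length :=
  List.ext_getElem (initSegs_length _ _).symm fun i h _ => by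
    rw [initSegs_getElem, getElem_eq_seqOf p h]

lemma seqOf_toPt (α : ℕ → ℕ) : seqOf (toPt α) = α := by
  funext i
  have hi : i < (initSegs α (i + 1)).length := by simp [initSegs_length]
  rw [← getElem_eq_seqOf (toPt α) hi]
  exact initSegs_getElem α hi

lemma seqOf_eq_of_begins {z : BairePre.Pt} {a : List ℕ} (h : BairePre.begins z.1 a) {i : ℕ}
    (hi : i < a.length) : seqOf z i = a[i] := by
  obtain ⟨k, hk, -⟩ := h
  rw [← getElem_eq_seqOf z (hi.trans_le hk.length_le), hk.getElem hi]

lemma pEquiv_iff_seqOf_eq {p q : BairePre.Pt} : BairePre.pEquiv p q ↔ seqOf p = seqOf q := by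
  constructor
  · intro hpq
    funext i
    by_contra hne
    obtain ⟨m, hm⟩ := exists_lt_length p i
    obtain ⟨k, hk⟩ := exists_lt_length q i
    refine hpq (BairePre.pApart_of_apart p q (a := m) (b := k)
      ⟨fun h => hne ?_, fun h => hne ?_⟩)
    · rw [← getElem_eq_seqOf p hm, ← getElem_eq_seqOf q hk, h.getElem hm]
    · rw [← getElem_eq_seqOf p hm, ← getElem_eq_seqOf q hk, h.getElem hk]
  · rintro hpq ⟨n, hn⟩
    rw [eq_initSegs_seqOf p, eq_initSegs_seqOf q, hpq] at hn
    rcases le_total (p.1 n).length (q.1 n).length with h | h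
    · exact hn.1 (initSegs_prefix_initSegs _ h)
    · exact hn.2 (initSegs_prefix_initSegs _ h)

lemma continuous_seqOf : Continuous seqOf := by
  refine continuous_pi fun i => continuous_discrete_rng.2 fun v x hx y => ?_
  by_cases hy : seqOf y i = v
  · obtain ⟨m, hm⟩ := exists_lt_length y i
    refine Or.inr ⟨m, fun z hz => ?_⟩
    rw [Set.mem_preimage, Set.mem_singleton_iff, seqOf_eq_of_begins hz hm,
      getElem_eq_seqOf y hm, hy]
  · refine Or.inl (not_not.1 fun hyx => hy ?_)
    exact (congrFun (pEquiv_iff_seqOf_eq.1 hyx) i).trans hx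

noncomputable def homeomorph : (ℕ → ℕ) ≃ₜ Quotient BairePre.ptSetoid where
  toFun α := Quotient.mk _ (toPt α)
  invFun := Quotient.lift seqOf fun _ _ => pEquiv_iff_seqOf_eq.1
  left_inv := seqOf_toPt
  right_inv q := Quotient.inductionOn q fun p =>
    Quotient.sound (pEquiv_iff_seqOf_eq.2 (seqOf_toPt (seqOf p)))
  continuous_toFun := continuous_quotient_mk'.comp continuous_toPt
  continuous_invFun := continuous_seqOf.quotient_lift _

end Baire

/-- `α ↦ ᾱ` (initial segments) sends each `α ∈ ℕ^ℕ` to a point of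
natural Baire space, and induces a homeomorphism from `ℕ^ℕ` (product topology)
onto `ℬ/≡`. -/
theorem stmt9 :
    (∀ α : ℕ → ℕ, BairePre.IsPoint (initSegs α)) ∧
    ∃ h : (ℕ → ℕ) ≃ₜ Quotient BairePre.ptSetoid,
      ∀ (α : ℕ → ℕ) (p : BairePre.Pt), (∀ n, p.1 n = initSegs α n) →
        h α = Quotient.mk BairePre.ptSetoid p := by
  refine ⟨Baire.isPoint_initSegs, Baire.homeomorph, fun α p hp => ?_⟩
  obtain rfl : p = Baire.toPt α := Subtype.ext (funext hp)
  rfl
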